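/- For an NB-irreducible graph G the following are equivalent: (1) ρ(G) = Λ(G); (2) G satisfies the suspended path condition; (3) G satisfies the cycle condition. -/

import Mathlib

open Finset Filter

namespace NB

variable {V : Type} [Fintype V] [DecidableEq V] (G : SimpleGraph V) [DecidableRel G.Adj]

/-- Transition relation between darts: `e → f` iff the head of `e` is the tail of `f`
and `f` is not the reversal of `e`. -/
def Step (d e : G.Dart) : Prop := d.snd = e.fst ∧ e ≠ d.symm

instance (d e : G.Dart) : Decidable (Step G d e) :=
  inferInstanceAs (Decidable (d.snd = e.fst ∧ e ≠ d.symm))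

/-- `outdeg(e) = deg(h(e)) - 1`. -/
def outdeg (d : G.Dart) : ℕ := G.degree d.snd - 1

/-- `indeg(e) = deg(t(e)) - 1`. -/
def indeg (d : G.Dart) : ℕ := G.degree d.fst - 1

/-- The non-backtracking adjacency matrix. -/
def B : Matrix G.Dart G.Dart ℝ := fun d e => if Step G d e then 1 else 0

/-- The NBRW transition matrix. -/
noncomputable def transMat : Matrix G.Dart G.Dart ℝ :=
  fun d e => if Step G d e then ((outdeg G d : ℝ))⁻¹ else 0

/-- NB-irreducibility: connected, min degree ≥ 2, max degree > 2. -/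
def NBIrreducible : Prop :=
  G.Connected ∧ (∀ v, 2 ≤ G.degree v) ∧ (∃ v, 2 < G.degree v)

/-- `Λ(G)`, the geometric mean of out-degrees over directed edges. -/
noncomputable def Lambda : ℝ :=
  (∏ d : G.Dart, (outdeg G d : ℝ)) ^ ((Fintype.card G.Dart : ℝ)⁻¹)

/-- The Perron (largest real) eigenvalue of a matrix. -/
noncomputable def perron {n : Type} [Fintype n] (M : Matrix n n ℝ) : ℝ :=
  sSup {r : ℝ | ∃ v : n → ℝ, v ≠ 0 ∧ M.mulVec v = r • v}

/-- A length-`ℓ` non-backtracking walk is a sequence of `ℓ+1` darts with consecutive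
transitions. -/
def IsNBWalk {ℓ : ℕ} (ω : Fin (ℓ + 1) → G.Dart) : Prop :=
  ∀ i : Fin ℓ, Step G (ω i.castSucc) (ω i.succ)

instance {ℓ : ℕ} (ω : Fin (ℓ + 1) → G.Dart) : Decidable (IsNBWalk G ω) :=
  inferInstanceAs (Decidable (∀ i : Fin ℓ, Step G (ω i.castSucc) (ω i.succ)))

/-- The set `Ω_ℓ` of length-`ℓ` non-backtracking walks. -/
def NBWalk (ℓ : ℕ) : Type := {ω : Fin (ℓ + 1) → G.Dart // IsNBWalk G ω}

instance (ℓ : ℕ) : Fintype (NBWalk G ℓ) := Subtype.fintype _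

/-- The NBRW probability of a walk, started from the uniform stationary distribution. -/
noncomputable def mu {ℓ : ℕ} (ω : NBWalk G ℓ) : ℝ :=
  (Fintype.card G.Dart : ℝ)⁻¹ * ∏ i : Fin ℓ, ((outdeg G (ω.1 i.castSucc) : ℝ))⁻¹

/-- Expectation over `Ω_ℓ` with respect to `μ`. -/
noncomputable def expect {ℓ : ℕ} (X : NBWalk G ℓ → ℝ) : ℝ :=
  ∑ ω : NBWalk G ℓ, mu G ω * X ω

/-- Variance over `Ω_ℓ` with respect to `μ`. -/
noncomputable def var {ℓ : ℕ} (X : NBWalk G ℓ → ℝ) : ℝ :=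
  expect G (fun ω => (X ω - expect G X) ^ 2)

/-- `R_ℓ(ω) = ∑ log₂ outdeg(e_i)`: the number of random bits consumed. -/
noncomputable def bits {ℓ : ℕ} (ω : NBWalk G ℓ) : ℝ :=
  ∑ i : Fin ℓ, Real.logb 2 (outdeg G (ω.1 i.castSucc))

/-- A suspended path `(e_0, …, e_n)` (of length `n+1`). -/
def IsSuspendedPath {n : ℕ} (P : Fin (n + 1) → G.Dart) : Prop :=
  (∀ i : Fin n, Step G (P i.castSucc) (P i.succ)) ∧
  (∀ i : Fin n, outdeg G (P i.castSucc) = 1) ∧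
  1 < outdeg G (P (Fin.last n)) ∧
  (∀ i : Fin n, indeg G (P i.succ) = 1) ∧
  1 < indeg G (P 0)

/-- The suspended path condition: `outdeg(P)·indeg(P) = Λ(G)^{2|P|}`. -/
noncomputable def SuspendedPathCondition : Prop :=
  ∀ (n : ℕ) (P : Fin (n + 1) → G.Dart), IsSuspendedPath G P →
    (outdeg G (P (Fin.last n)) : ℝ) * (indeg G (P 0) : ℝ) = Lambda G ^ (2 * (n + 1))

/-- A non-backtracking cycle `(e_0, …, e_n)` (of length `n+1`). -/
def IsNBCycle {n : ℕ} (C : Fin (n + 1) → G.Dart) : Prop :=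
  ∀ i : Fin (n + 1), Step G (C i) (C (i + 1))

/-- The cycle condition: `∏_{e∈C} outdeg(e) = Λ(G)^{|C|}`. -/
noncomputable def CycleCondition : Prop :=
  ∀ (n : ℕ) (C : Fin (n + 1) → G.Dart), IsNBCycle G C →
    (∏ i : Fin (n + 1), (outdeg G (C i) : ℝ)) = Lambda G ^ (n + 1)


set_option linter.unusedSectionVars false
set_option maxHeartbeats 1000000

section AuxLemmas

variable {G}

/-! ### Basic dart lemmas -/

lemma symm_fst (d : G.Dart) : d.symm.fst = d.snd := rfl
lemma symm_snd (d : G.Dart) : d.symm.snd = d.fst := rfl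

lemma step_symm {d e : G.Dart} (h : Step G d e) : Step G e.symm d.symm := by
  obtain ⟨h1, h2⟩ := h
  refine ⟨h1.symm, fun hc => h2 ?_⟩
  rw [SimpleGraph.Dart.symm_symm] at hc
  exact hc.symm

lemma step_not_self (d : G.Dart) : ¬ Step G d d := fun h => d.adj.ne' h.1

lemma outdeg_symm (d : G.Dart) : outdeg G d.symm = indeg G d := rfl
lemma indeg_symm (d : G.Dart) : indeg G d.symm = outdeg G d := rfl

lemma step_outdeg_eq_indeg {d e : G.Dart} (h : Step G d e) : outdeg G d = indeg G e := by
  unfold outdeg indeg; rw [h.1]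

variable (G) in
def succs (d : G.Dart) : Finset G.Dart := univ.filter (fun e => Step G d e)

variable (G) in
def preds (e : G.Dart) : Finset G.Dart := univ.filter (fun d => Step G d e)

lemma mem_succs {d e : G.Dart} : e ∈ succs G d ↔ Step G d e := by simp [succs]
lemma mem_preds {d e : G.Dart} : d ∈ preds G e ↔ Step G d e := by simp [preds]

lemma card_fst_fiber (v : V) : #(univ.filter (fun d : G.Dart => d.fst = v)) = G.degree v :=
  SimpleGraph.dart_fst_fiber_card_eq_degree G v

lemma card_snd_fiber (v : V) : #(univ.filter (fun d : G.Dart => d.snd = v)) = G.degree v := by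
  rw [← card_fst_fiber (G := G) v]
  apply Finset.card_bij (fun d _ => d.symm)
  · intro a ha; simp only [mem_filter, mem_univ, true_and] at ha ⊢; rw [symm_fst, ha]
  · intro a _ b _ hab
    have := congrArg SimpleGraph.Dart.symm hab
    rwa [SimpleGraph.Dart.symm_symm, SimpleGraph.Dart.symm_symm] at this
  · intro b hb
    simp only [mem_filter, mem_univ, true_and] at hb ⊢
    exact ⟨b.symm, by rw [symm_snd, hb], (SimpleGraph.Dart.symm_symm b).symm⟩

lemma card_succs (d : G.Dart) : #(succs G d) = outdeg G d := by
  have : succs G d = (univ.filter (fun e : G.Dart => e.fst = d.snd)).erase d.symm := by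
    ext e
    simp only [mem_succs, Step, mem_erase, mem_filter, mem_univ, true_and]
    constructor
    · rintro ⟨h1, h2⟩; exact ⟨h2, h1.symm⟩
    · rintro ⟨h1, h2⟩; exact ⟨h2.symm, h1⟩
  rw [this, Finset.card_erase_of_mem (by simp [symm_fst]), card_fst_fiber]
  rfl

lemma card_preds (e : G.Dart) : #(preds G e) = indeg G e := by
  have : preds G e = (univ.filter (fun d : G.Dart => d.snd = e.fst)).erase e.symm := by
    ext d
    simp only [mem_preds, Step, mem_erase, mem_filter, mem_univ, true_and]
    constructor
    · rintro ⟨h1, h2⟩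
      refine ⟨fun hc => h2 ?_, h1⟩
      rw [hc, SimpleGraph.Dart.symm_symm]
    · rintro ⟨h1, h2⟩
      refine ⟨h2, fun hc => h1 ?_⟩
      rw [hc, SimpleGraph.Dart.symm_symm]
  rw [this, Finset.card_erase_of_mem (by simp [symm_snd]), card_snd_fiber]
  rfl

section Degrees
variable (hdeg : ∀ v, 2 ≤ G.degree v)
include hdeg

lemma outdeg_pos (d : G.Dart) : 1 ≤ outdeg G d := by
  have := hdeg d.snd; unfold outdeg; omega

lemma indeg_pos (d : G.Dart) : 1 ≤ indeg G d := by
  have := hdeg d.fst; unfold indeg; omega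

lemma exists_succ (d : G.Dart) : ∃ e, Step G d e := by
  have h1 : 0 < #(succs G d) := by rw [card_succs]; exact outdeg_pos hdeg d
  obtain ⟨e, he⟩ := Finset.card_pos.mp h1
  exact ⟨e, mem_succs.mp he⟩

lemma outdeg_cast_pos (d : G.Dart) : (0:ℝ) < (outdeg G d : ℝ) := by
  exact_mod_cast outdeg_pos hdeg d

end Degrees

lemma card_dart_pos (h : NBIrreducible G) : 0 < Fintype.card G.Dart := by
  obtain ⟨-, hdeg, v, -⟩ := h
  have h1 : 0 < G.degree v := lt_of_lt_of_le (by norm_num) (hdeg v)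
  rw [← SimpleGraph.card_neighborFinset_eq_degree] at h1
  obtain ⟨w, hw⟩ := Finset.card_pos.mp h1
  exact Fintype.card_pos_iff.mpr ⟨⟨(v, w), (SimpleGraph.mem_neighborFinset G v w).mp hw⟩⟩

lemma prod_outdeg_pos (h : NBIrreducible G) : 0 < ∏ d : G.Dart, (outdeg G d : ℝ) :=
  Finset.prod_pos fun d _ => outdeg_cast_pos h.2.1 d

lemma lambda_pos (h : NBIrreducible G) : 0 < Lambda G :=
  Real.rpow_pos_of_pos (prod_outdeg_pos h) _

lemma lambda_pow_card (h : NBIrreducible G) :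
    Lambda G ^ (Fintype.card G.Dart) = ∏ d : G.Dart, (outdeg G d : ℝ) := by
  have hx : (0:ℝ) ≤ ∏ d : G.Dart, (outdeg G d : ℝ) := (prod_outdeg_pos h).le
  have hN : (Fintype.card G.Dart : ℝ) ≠ 0 := by
    exact_mod_cast (card_dart_pos h).ne'
  rw [Lambda, ← Real.rpow_natCast (_ ^ _), ← Real.rpow_mul hx, inv_mul_cancel₀ hN,
    Real.rpow_one]


/-! ### Adjacency-closed sets, flat cycles, strong connectivity -/

lemma adjClosed_eq_univ (hconn : G.Connected) (W : Set V) (hne : ∃ w, w ∈ W)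
    (hcl : ∀ v ∈ W, ∀ x, G.Adj v x → x ∈ W) : ∀ v, v ∈ W := by
  obtain ⟨w, hw⟩ := hne
  intro v
  have key : ∀ (a : V) (_ : G.Walk a v), a ∈ W → v ∈ W := by
    intro a p
    induction p with
    | nil => exact id
    | cons h _ ih => intro ha; exact ih (hcl _ ha _ h)
  exact key w ((hconn.preconnected w v).some) hw

lemma exists_branch_of_cycle (h : NBIrreducible G) {n : ℕ} {C : Fin (n+1) → G.Dart}
    (hC : IsNBCycle G C) : ∃ i, 1 < outdeg G (C i) := by
  by_contra hb
  push_neg at hb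
  obtain ⟨hconn, hdeg, v3, hv3⟩ := h
  have hdeg2 : ∀ i, G.degree (C i).snd = 2 := by
    intro i
    have h1 := hb i; have h2 := hdeg (C i).snd
    unfold outdeg at h1; omega
  have hcl : ∀ v ∈ {v | ∃ i, (C i).snd = v}, ∀ x, G.Adj v x → x ∈ {v | ∃ i, (C i).snd = v} := by
    rintro v ⟨i, rfl⟩ x hx
    have h1 : (C (i+1)).fst = (C i).snd := ((hC i).1).symm
    have hne2 : (C i).fst ≠ (C (i+1)).snd := by
      intro hc
      apply (hC i).2
      apply SimpleGraph.Dart.ext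
      exact Prod.ext h1 hc.symm
    have hsub : ({(C i).fst, (C (i+1)).snd} : Finset V) ⊆ G.neighborFinset (C i).snd := by
      rw [Finset.insert_subset_iff, Finset.singleton_subset_iff,
        SimpleGraph.mem_neighborFinset, SimpleGraph.mem_neighborFinset]
      refine ⟨(C i).adj.symm, ?_⟩
      have := (C (i+1)).adj
      rwa [h1] at this
    have hcard2 : #(G.neighborFinset (C i).snd) = 2 := by
      rw [SimpleGraph.card_neighborFinset_eq_degree]; exact hdeg2 i
    have heq : ({(C i).fst, (C (i+1)).snd} : Finset V) = G.neighborFinset (C i).snd := by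
      apply Finset.eq_of_subset_of_card_le hsub
      rw [hcard2, Finset.card_pair hne2]
    have hx' : x ∈ ({(C i).fst, (C (i+1)).snd} : Finset V) := by
      rw [heq, SimpleGraph.mem_neighborFinset]; exact hx
    rcases Finset.mem_insert.mp hx' with hx1 | hx2
    · refine ⟨i - 1, ?_⟩
      have := (hC (i-1)).1
      rw [sub_add_cancel] at this
      rw [this, ← hx1]
    · exact ⟨i + 1, (Finset.mem_singleton.mp hx2).symm⟩
  have hvW := adjClosed_eq_univ hconn {v | ∃ i, (C i).snd = v}
    ⟨(C 0).snd, ⟨0, rfl⟩⟩ hcl v3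
  obtain ⟨i, hi⟩ := hvW
  rw [← hi] at hv3
  have := hdeg2 i
  omega

lemma strong_conn (h : NBIrreducible G) : ∀ d e : G.Dart, Relation.ReflTransGen (Step G) d e := by
  obtain ⟨hconn, hdeg, hv3⟩ := h
  classical
  set R : G.Dart → G.Dart → Prop := Relation.ReflTransGen (Step G) with hR
  have hne : (univ : Finset G.Dart).Nonempty := by
    have := card_dart_pos ⟨hconn, hdeg, hv3⟩
    rwa [← Finset.card_univ, Finset.card_pos] at this
  obtain ⟨m, -, hmin⟩ := Finset.exists_min_image univ
    (fun d => #(univ.filter (fun e => R d e))) hne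
  have hback : ∀ e, R m e → R e m := by
    intro e he
    have hsub : univ.filter (fun f => R e f) ⊆ univ.filter (fun f => R m f) := by
      intro f hf
      simp only [mem_filter, mem_univ, true_and] at *
      exact he.trans hf
    have heq := Finset.eq_of_subset_of_card_le hsub (hmin e (mem_univ e))
    have hm : m ∈ univ.filter (fun f => R e f) := by
      rw [heq]; simp only [mem_filter, mem_univ, true_and]
      exact Relation.ReflTransGen.refl
    simpa using hm
  set S : G.Dart → Prop := fun e => R m e with hS
  have hSsucc : ∀ {a b}, S a → Step G a b → S b := fun ha hs => ha.tail hs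
  have hSpred : ∀ a, S a → ∃ p, S p ∧ Step G p a := by
    intro a ha
    by_cases ham : a = m
    · subst ham
      obtain ⟨f, hf⟩ := exists_succ hdeg a
      have hSf : S f := Relation.ReflTransGen.single hf
      have hfm : R f a := hback f hSf
      rcases Relation.ReflTransGen.cases_tail hfm with heq | ⟨c, hfc, hcm⟩
      · rw [← heq] at hf; exact absurd hf (step_not_self a)
      · exact ⟨c, hSf.trans hfc, hcm⟩
    · rcases Relation.ReflTransGen.cases_tail ha with heq | ⟨c, hmc, hca⟩
      · exact absurd heq ham
      · exact ⟨c, hmc, hca⟩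
  have hhead : ∀ v : V, ∃ a, S a ∧ a.snd = v := by
    refine adjClosed_eq_univ hconn {v | ∃ a, S a ∧ a.snd = v}
      ⟨m.snd, m, Relation.ReflTransGen.refl, rfl⟩ ?_
    rintro v ⟨a, hSa, rfl⟩ x hx
    by_cases hxf : x = a.fst
    · obtain ⟨p, hSp, hp⟩ := hSpred a hSa
      exact ⟨p, hSp, hp.1.trans hxf.symm⟩
    · refine ⟨⟨(a.snd, x), hx⟩, hSsucc hSa ⟨rfl, ?_⟩, rfl⟩
      intro hc
      apply hxf
      have := congrArg (fun d : G.Dart => d.snd) hc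
      simpa using this
  have hX1 : ∀ q, ¬ S q → (S q.symm ∧ ∀ p, S p → p.snd = q.fst → p = q.symm) := by
    intro q hq
    have huniq : ∀ p, S p → p.snd = q.fst → p = q.symm := by
      intro p hSp hpq
      by_contra hne2
      have hstep : Step G p q := by
        refine ⟨hpq, fun hc => hne2 ?_⟩
        rw [hc, SimpleGraph.Dart.symm_symm]
      exact hq (hSsucc hSp hstep)
    obtain ⟨p, hSp, hp⟩ := hhead q.fst
    have hpq := huniq p hSp hp
    exact ⟨hpq ▸ hSp, huniq⟩
  have hX2 : ∀ q1 q2, ¬ S q1 → ¬ S q2 → q1.fst = q2.fst → q1 = q2 := by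
    intro q1 q2 h1 h2 hf
    obtain ⟨hs2, -⟩ := hX1 q2 h2
    obtain ⟨-, hu1⟩ := hX1 q1 h1
    have hres := hu1 q2.symm hs2 (by rw [symm_snd, ← hf])
    have := congrArg SimpleGraph.Dart.symm hres
    rw [SimpleGraph.Dart.symm_symm, SimpleGraph.Dart.symm_symm] at this
    exact this.symm
  have hX5 : ∀ q, ¬ S q → G.degree q.fst = 2 := by
    intro q hq
    set Xf : Finset G.Dart := univ.filter (fun d => ¬ S d) with hXf
    set A : Finset V := Xf.image (fun d => d.fst) with hA
    have hmemXf : ∀ d : G.Dart, d ∈ Xf ↔ ¬ S d := by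
      intro d; simp [hXf]
    have hcardA : #A = #Xf :=
      Finset.card_image_of_injOn (fun a ha b hb hab =>
        hX2 a b ((hmemXf a).mp ha) ((hmemXf b).mp hb) hab)
    have hIa : ∀ a ∈ A, #(Xf.filter (fun d => d.snd = a)) = G.degree a - 1 := by
      intro a haA
      obtain ⟨qa, hqa, rfl⟩ := Finset.mem_image.mp haA
      have hqa' : ¬ S qa := (hmemXf qa).mp hqa
      obtain ⟨hsymm, huniq⟩ := hX1 qa hqa'
      have hset : Xf.filter (fun d => d.snd = qa.fst)
          = (univ.filter (fun d : G.Dart => d.snd = qa.fst)).erase qa.symm := by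
        ext d
        simp only [hXf, Finset.filter_filter, mem_filter, mem_univ, true_and, mem_erase]
        constructor
        · rintro ⟨h1, h2⟩; exact ⟨fun hc => h1 (hc ▸ hsymm), h2⟩
        · rintro ⟨h1, h2⟩; exact ⟨fun hSd => h1 (huniq d hSd h2), h2⟩
      rw [hset, Finset.card_erase_of_mem (by simp [symm_snd]), card_snd_fiber]
    have hdisj : ∀ a ∈ A, ∀ b ∈ A, a ≠ b →
        Disjoint (Xf.filter (fun d => d.snd = a)) (Xf.filter (fun d => d.snd = b)) := by
      intro a _ b _ hab
      refine Finset.disjoint_left.mpr ?_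
      intro d hd1 hd2
      simp only [mem_filter] at hd1 hd2
      exact hab (hd1.2.symm.trans hd2.2)
    have hsum : ∑ a ∈ A, #(Xf.filter (fun d => d.snd = a)) ≤ #Xf := by
      rw [← Finset.card_biUnion hdisj]
      apply Finset.card_le_card
      intro d hd
      rw [Finset.mem_biUnion] at hd
      obtain ⟨a, -, hda⟩ := hd
      exact (Finset.mem_filter.mp hda).1
    have hge : ∀ a ∈ A, 1 ≤ G.degree a - 1 := by
      intro a _; have := hdeg a; omega
    have hall : ∀ a ∈ A, G.degree a - 1 = 1 := by
      by_contra hcon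
      push_neg at hcon
      obtain ⟨a0, ha0, hne0⟩ := hcon
      have hlt : #A < ∑ a ∈ A, (G.degree a - 1) := by
        have : #A = ∑ _a ∈ A, 1 := by simp
        rw [this]
        refine Finset.sum_lt_sum hge ⟨a0, ha0, ?_⟩
        have := hge a0 ha0; omega
      have hle : ∑ a ∈ A, (G.degree a - 1) ≤ #A := by
        rw [hcardA]
        calc ∑ a ∈ A, (G.degree a - 1) = ∑ a ∈ A, #(Xf.filter (fun d => d.snd = a)) :=
              Finset.sum_congr rfl (fun a ha => (hIa a ha).symm)
          _ ≤ #Xf := hsum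
      omega
    have hqA : q.fst ∈ A := Finset.mem_image.mpr ⟨q, (hmemXf q).mpr hq, rfl⟩
    have h1 := hall q.fst hqA
    have h2 := hdeg q.fst
    omega
  have hSall : ∀ q, S q := by
    by_contra hcon
    push_neg at hcon
    obtain ⟨q0, hq0⟩ := hcon
    have hprev : ∀ q : {d : G.Dart // ¬ S d}, ∃ p : {d : G.Dart // ¬ S d}, Step G p.1 q.1 := by
      rintro ⟨q, hq⟩
      have hmem : q.symm ∈ univ.filter (fun d : G.Dart => d.snd = q.fst) := by
        simp [symm_snd]
      have hnne : ((univ.filter (fun d : G.Dart => d.snd = q.fst)).erase q.symm).Nonempty := by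
        rw [← Finset.card_pos, Finset.card_erase_of_mem hmem, card_snd_fiber]
        have := hdeg q.fst; omega
      obtain ⟨p, hp⟩ := hnne
      rw [Finset.mem_erase, Finset.mem_filter] at hp
      have hstep : Step G p q := by
        refine ⟨hp.2.2, fun hc => hp.1 ?_⟩
        rw [hc, SimpleGraph.Dart.symm_symm]
      exact ⟨⟨p, fun hSp => hq (hSsucc hSp hstep)⟩, hstep⟩
    choose prev hprevs using hprev
    set g : ℕ → {d : G.Dart // ¬ S d} := fun k => prev^[k] ⟨q0, hq0⟩ with hg
    have hgstep : ∀ k, Step G (g (k+1)).1 (g k).1 := by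
      intro k
      have : g (k+1) = prev (g k) := Function.iterate_succ_apply' prev k _
      rw [this]; exact hprevs (g k)
    obtain ⟨i0, j0, hij0, hgij0⟩ := Finite.exists_ne_map_eq_of_infinite g
    have hlt : ∃ i j, i < j ∧ g i = g j := by
      rcases hij0.lt_or_gt with hl | hl
      · exact ⟨i0, j0, hl, hgij0⟩
      · exact ⟨j0, i0, hl, hgij0.symm⟩
    obtain ⟨i, j, hij, hgij⟩ := hlt
    set n := j - i - 1 with hn
    set C : Fin (n+1) → G.Dart := fun t => (g (j - t.1)).1 with hC
    have hcyc : IsNBCycle G C := by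
      intro t
      by_cases ht : t.1 < n
      · have h1 : (t+1).1 = t.1 + 1 := by
          apply Fin.val_add_one_of_lt
          rw [Fin.lt_def, Fin.val_last]
          omega
        have e1 : j - t.1 = (j - (t.1+1)) + 1 := by omega
        show Step G (g (j - t.1)).1 (g (j - (t+1).1)).1
        rw [h1, e1]
        exact hgstep _
      · have ht' : t.1 = n := by omega
        have htl : t = Fin.last n := by
          apply Fin.ext; rw [Fin.val_last]; exact ht'
        have h0 : t + 1 = 0 := by rw [htl]; exact Fin.last_add_one n
        show Step G (C t) (C (t+1))
        rw [h0]
        show Step G (g (j - t.1)).1 (g (j - (0:Fin (n+1)).1)).1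
        have e1 : j - t.1 = i + 1 := by omega
        have e2 : j - (0:Fin (n+1)).1 = j := by simp
        rw [e1, e2, ← hgij]
        exact hgstep i
    obtain ⟨t, hbr⟩ := exists_branch_of_cycle ⟨hconn, hdeg, hv3⟩ hcyc
    have h1 : (C t).snd = (C (t+1)).fst := (hcyc t).1
    have h2 : G.degree (C (t+1)).fst = 2 := hX5 _ (g _).2
    unfold outdeg at hbr
    rw [h1, h2] at hbr
    omega
  intro d e
  exact (hback d (hSall d)).trans (hSall e)

/-! ### Matrix lemmas, coboundaries, eigenvalue bounds -/

lemma mulVec_B (z : G.Dart → ℝ) (d : G.Dart) :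
    (B G).mulVec z d = ∑ e ∈ succs G d, z e := by
  unfold Matrix.mulVec dotProduct B succs
  rw [Finset.sum_filter]
  exact Finset.sum_congr rfl (fun e _ => by by_cases hse : Step G d e <;> simp [hse])

variable (G) in
/-- A positive multiplicative coboundary trivializing the outdegree cocycle. -/
def Cobound (z : G.Dart → ℝ) : Prop :=
  (∀ d, 0 < z d) ∧ ∀ ⦃d e⦄, Step G d e → (outdeg G d : ℝ) * z e = Lambda G * z d

lemma cobound_eigen (h : NBIrreducible G) {z : G.Dart → ℝ} (hz : Cobound G z) :
    (B G).mulVec z = Lambda G • z := by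
  funext d
  rw [mulVec_B]
  have hD : (0:ℝ) < (outdeg G d : ℝ) := outdeg_cast_pos h.2.1 d
  have hval : ∀ e ∈ succs G d, z e = Lambda G * z d / (outdeg G d : ℝ) := by
    intro e he
    rw [eq_div_iff hD.ne', mul_comm]
    exact hz.2 (mem_succs.mp he)
  rw [Finset.sum_congr rfl hval, Finset.sum_const, card_succs, nsmul_eq_mul,
    Pi.smul_apply, smul_eq_mul]
  field_simp

lemma cobound_CC (h : NBIrreducible G) {z : G.Dart → ℝ} (hz : Cobound G z) :
    CycleCondition G := by
  intro n C hC
  have key : ∀ i, (outdeg G (C i) : ℝ) = Lambda G * z (C i) / z (C (i+1)) := by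
    intro i
    rw [eq_div_iff (hz.1 (C (i+1))).ne']
    exact hz.2 (hC i)
  rw [Finset.prod_congr rfl (fun i _ => key i), Finset.prod_div_distrib,
    Finset.prod_mul_distrib, Finset.prod_const]
  have hre : ∏ i : Fin (n+1), z (C (i+1)) = ∏ i : Fin (n+1), z (C i) :=
    Equiv.prod_comp (Equiv.addRight (1 : Fin (n+1))) (fun j => z (C j))
  have hP : (∏ i : Fin (n+1), z (C i)) ≠ 0 := (Finset.prod_pos fun i _ => hz.1 _).ne'
  rw [hre, mul_div_assoc, div_self hP, mul_one, Finset.card_univ, Fintype.card_fin]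

lemma ratio_bound {z : G.Dart → ℝ} {lam : ℝ} (hz : ∀ d, 0 < z d)
    (heig : (B G).mulVec z = lam • z) {v : G.Dart → ℝ} {r : ℝ}
    (hv : v ≠ 0) (hveig : (B G).mulVec v = r • v) : r ≤ lam := by
  obtain ⟨d0, hd0⟩ := Function.ne_iff.mp hv
  have hne : (univ : Finset G.Dart).Nonempty := ⟨d0, mem_univ d0⟩
  obtain ⟨e0, -, hmax⟩ := Finset.exists_max_image univ (fun e => |v e| / z e) hne
  have hz0 := hz e0
  have hbound : ∀ e, |v e| ≤ |v e0| / z e0 * z e := by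
    intro e
    have h1 := hmax e (mem_univ e)
    rw [div_le_div_iff₀ (hz e) hz0] at h1
    rw [div_mul_eq_mul_div, le_div_iff₀ hz0]
    linarith
  have hpos : 0 < |v e0| := by
    have h1 : 0 < |v d0| / z d0 := div_pos (abs_pos.mpr hd0) (hz d0)
    have h2 := lt_of_lt_of_le h1 (hmax d0 (mem_univ d0))
    by_contra hcon
    push_neg at hcon
    have : |v e0| = 0 := le_antisymm hcon (abs_nonneg _)
    rw [this, zero_div] at h2
    exact lt_irrefl _ h2
  have key : |r| * |v e0| ≤ lam * |v e0| := by
    have h1 : (B G).mulVec v e0 = r * v e0 := by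
      rw [hveig, Pi.smul_apply, smul_eq_mul]
    calc |r| * |v e0| = |r * v e0| := (abs_mul r (v e0)).symm
      _ = |∑ e ∈ succs G e0, v e| := by rw [← h1, mulVec_B]
      _ ≤ ∑ e ∈ succs G e0, |v e| := Finset.abs_sum_le_sum_abs _ _
      _ ≤ ∑ e ∈ succs G e0, |v e0| / z e0 * z e :=
          Finset.sum_le_sum (fun e _ => hbound e)
      _ = |v e0| / z e0 * ∑ e ∈ succs G e0, z e := by rw [Finset.mul_sum]
      _ = |v e0| / z e0 * (lam * z e0) := by
          rw [← mulVec_B, heig, Pi.smul_apply, smul_eq_mul]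
      _ = lam * |v e0| := by field_simp
  have habs : |r| ≤ lam := le_of_mul_le_mul_right key hpos
  exact le_trans (le_abs_self r) habs

lemma perron_eq_of_eigen (h : NBIrreducible G) {z : G.Dart → ℝ} {lam : ℝ}
    (hz : ∀ d, 0 < z d) (heig : (B G).mulVec z = lam • z) : perron (B G) = lam := by
  have hdart : Nonempty G.Dart := Fintype.card_pos_iff.mp (card_dart_pos h)
  have hzne : z ≠ 0 := by
    intro hc
    obtain ⟨d⟩ := hdart
    have := hz d
    rw [hc] at this
    exact lt_irrefl _ this
  apply IsGreatest.csSup_eq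
  constructor
  · exact ⟨z, hzne, heig⟩
  · rintro r ⟨v, hv, hveig⟩
    exact ratio_bound hz heig hv hveig

/-! ### The entropy/Jensen argument -/

lemma pairing_sum (h : NBIrreducible G) (ψ : G.Dart → ℝ) :
    ∑ d : G.Dart, (outdeg G d : ℝ)⁻¹ * ∑ e ∈ succs G d, ψ e = ∑ e : G.Dart, ψ e := by
  have hdeg := h.2.1
  calc ∑ d : G.Dart, (outdeg G d : ℝ)⁻¹ * ∑ e ∈ succs G d, ψ e
      = ∑ d : G.Dart, ∑ e : G.Dart, (if Step G d e then (outdeg G d : ℝ)⁻¹ * ψ e else 0) := by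
        refine Finset.sum_congr rfl (fun d _ => ?_)
        rw [Finset.mul_sum]
        unfold succs
        rw [Finset.sum_filter]
    _ = ∑ e : G.Dart, ∑ d : G.Dart, (if Step G d e then (outdeg G d : ℝ)⁻¹ * ψ e else 0) :=
        Finset.sum_comm
    _ = ∑ e : G.Dart, ψ e := by
        refine Finset.sum_congr rfl (fun e _ => ?_)
        rw [← Finset.sum_filter]
        have hfp : (univ.filter fun d => Step G d e) = preds G e := rfl
        rw [hfp]
        have h1 : ∀ d ∈ preds G e, (outdeg G d : ℝ)⁻¹ * ψ e = (indeg G e : ℝ)⁻¹ * ψ e := by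
          intro d hd
          rw [step_outdeg_eq_indeg (mem_preds.mp hd)]
        rw [Finset.sum_congr rfl h1, Finset.sum_const, card_preds, nsmul_eq_mul]
        have hind : (0:ℝ) < (indeg G e : ℝ) := by exact_mod_cast indeg_pos hdeg e
        field_simp

lemma eigen_ge_lambda (h : NBIrreducible G) {z : G.Dart → ℝ} {lam : ℝ}
    (hz : ∀ d, 0 < z d) (heig : (B G).mulVec z = lam • z) :
    Lambda G ≤ lam ∧ (lam = Lambda G → Cobound G z) := by
  have hdeg := h.2.1
  have hdartpos := card_dart_pos h
  have hL := lambda_pos h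
  have heq : ∀ d, ∑ e ∈ succs G d, z e = lam * z d := by
    intro d
    have h1 := congrFun heig d
    rwa [mulVec_B, Pi.smul_apply, smul_eq_mul] at h1
  have hlam : 0 < lam := by
    obtain ⟨d⟩ := Fintype.card_pos_iff.mp hdartpos
    have h1 : 0 < ∑ e ∈ succs G d, z e := by
      apply Finset.sum_pos (fun e _ => hz e)
      rw [← Finset.card_pos, card_succs]
      exact outdeg_pos hdeg d
    rw [heq d] at h1
    by_contra hcon
    push_neg at hcon
    nlinarith [hz d]
  set φ : G.Dart → G.Dart → ℝ := fun d e => (outdeg G d : ℝ) * z e / (lam * z d) with hφ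
  have hφpos : ∀ d e, 0 < φ d e := by
    intro d e
    have := outdeg_cast_pos hdeg d
    have := hz e
    have := hz d
    positivity
  have hsumφ : ∀ d, ∑ e ∈ succs G d, φ d e = (outdeg G d : ℝ) := by
    intro d
    simp only [hφ]
    rw [← Finset.sum_div, ← Finset.mul_sum, heq d]
    have := hz d
    field_simp
  have hterm : ∀ d e, 0 ≤ φ d e - 1 - Real.log (φ d e) := by
    intro d e
    have := Real.log_le_sub_one_of_pos (hφpos d e)
    linarith
  set T : ℝ := ∑ d : G.Dart,
    (outdeg G d : ℝ)⁻¹ * ∑ e ∈ succs G d, (φ d e - 1 - Real.log (φ d e)) with hT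
  have houter : ∀ d : G.Dart,
      0 ≤ (outdeg G d : ℝ)⁻¹ * ∑ e ∈ succs G d, (φ d e - 1 - Real.log (φ d e)) := by
    intro d
    apply mul_nonneg (by positivity)
    exact Finset.sum_nonneg (fun e _ => hterm d e)
  have hTnn : 0 ≤ T := Finset.sum_nonneg (fun d _ => houter d)
  have hlogsum : ∑ d : G.Dart, Real.log (outdeg G d : ℝ)
      = (Fintype.card G.Dart : ℝ) * Real.log (Lambda G) := by
    rw [← Real.log_prod (fun d _ => (outdeg_cast_pos hdeg d).ne'), ← lambda_pow_card h,
      Real.log_pow]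
  have hinner : ∀ d : G.Dart,
      (outdeg G d : ℝ)⁻¹ * ∑ e ∈ succs G d, (φ d e - 1 - Real.log (φ d e))
      = -(Real.log (outdeg G d : ℝ) - Real.log lam - Real.log (z d))
        - (outdeg G d : ℝ)⁻¹ * ∑ e ∈ succs G d, Real.log (z e) := by
    intro d
    have hD := outdeg_cast_pos hdeg d
    have hlog : ∀ e ∈ succs G d, Real.log (φ d e)
        = (Real.log (outdeg G d : ℝ) - Real.log lam - Real.log (z d)) + Real.log (z e) := by
      intro e _
      simp only [hφ]
      rw [Real.log_div (mul_pos hD (hz e)).ne' (mul_pos hlam (hz d)).ne', Real.log_mul hD.ne' (hz e).ne',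
        Real.log_mul hlam.ne' (hz d).ne']
      ring
    have hstep1 : ∑ e ∈ succs G d, (φ d e - 1 - Real.log (φ d e))
        = (∑ e ∈ succs G d, φ d e) - (#(succs G d) : ℝ)
          - ∑ e ∈ succs G d, Real.log (φ d e) := by
      rw [Finset.sum_sub_distrib, Finset.sum_sub_distrib, Finset.sum_const, nsmul_eq_mul,
        mul_one]
    have hstep2 : ∑ e ∈ succs G d, Real.log (φ d e)
        = (outdeg G d : ℝ) * (Real.log (outdeg G d : ℝ) - Real.log lam - Real.log (z d))
          + ∑ e ∈ succs G d, Real.log (z e) := by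
      rw [Finset.sum_congr rfl hlog, Finset.sum_add_distrib, Finset.sum_const, card_succs,
        nsmul_eq_mul]
    rw [hstep1, hstep2, hsumφ d, card_succs]
    field_simp
    ring
  have hTval : T = (Fintype.card G.Dart : ℝ) * (Real.log lam - Real.log (Lambda G)) := by
    rw [hT, Finset.sum_congr rfl (fun d _ => hinner d)]
    rw [Finset.sum_sub_distrib, pairing_sum h (fun e => Real.log (z e))]
    simp only [neg_sub]
    rw [Finset.sum_sub_distrib, Finset.sum_sub_distrib, hlogsum, Finset.sum_const,
      Finset.card_univ, nsmul_eq_mul]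
    ring
  constructor
  · have h1 : 0 ≤ (Fintype.card G.Dart : ℝ) * (Real.log lam - Real.log (Lambda G)) := by
      rw [← hTval]; exact hTnn
    have hN : (0:ℝ) < (Fintype.card G.Dart : ℝ) := by exact_mod_cast hdartpos
    have h2 : Real.log (Lambda G) ≤ Real.log lam := by nlinarith
    exact (Real.log_le_log_iff hL hlam).mp h2
  · intro hlamL
    refine ⟨hz, ?_⟩
    have hT0 : T = 0 := by rw [hTval, hlamL, sub_self, mul_zero]
    have hout0 : ∀ d ∈ (univ : Finset G.Dart),
        (outdeg G d : ℝ)⁻¹ * ∑ e ∈ succs G d, (φ d e - 1 - Real.log (φ d e)) = 0 :=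
      (Finset.sum_eq_zero_iff_of_nonneg (fun d _ => houter d)).mp hT0
    intro d e hde
    have hD := outdeg_cast_pos hdeg d
    have hs0 : ∑ e' ∈ succs G d, (φ d e' - 1 - Real.log (φ d e')) = 0 := by
      have h1 := hout0 d (mem_univ d)
      rcases mul_eq_zero.mp h1 with h2 | h2
      · exact absurd h2 (by positivity : (0:ℝ) < (outdeg G d : ℝ)⁻¹).ne'
      · exact h2
    have hterm0 : ∀ e' ∈ succs G d, φ d e' - 1 - Real.log (φ d e') = 0 :=
      (Finset.sum_eq_zero_iff_of_nonneg (fun e' _ => hterm d e')).mp hs0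
    have he' : e ∈ succs G d := mem_succs.mpr hde
    have hφ1 : φ d e = 1 := by
      by_contra hne1
      have hstrict := Real.log_lt_sub_one_of_pos (hφpos d e) hne1
      have := hterm0 e he'
      linarith
    have hval : (outdeg G d : ℝ) * z e / (lam * z d) = 1 := hφ1
    rw [div_eq_one_iff_eq (mul_pos hlam (hz d)).ne'] at hval
    rw [hval, hlamL]

/-! ### Perron–Frobenius existence via Wielandt's argument -/

lemma B_nonneg (d e : G.Dart) : 0 ≤ B G d e := by
  unfold B; by_cases hs : Step G d e <;> simp [hs]

lemma Bpow_nonneg (k : ℕ) (d e : G.Dart) : 0 ≤ ((B G)^k) d e := by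
  induction k generalizing d e with
  | zero =>
    rw [pow_zero, Matrix.one_apply]
    by_cases hde : d = e <;> simp [hde]
  | succ k ih =>
    rw [pow_succ, Matrix.mul_apply]
    exact Finset.sum_nonneg (fun c _ => mul_nonneg (ih d c) (B_nonneg c e))

lemma rtg_Bpow_pos {d e : G.Dart} (h : Relation.ReflTransGen (Step G) d e) :
    ∃ k, 0 < ((B G)^k) d e := by
  induction h with
  | refl => exact ⟨0, by rw [pow_zero, Matrix.one_apply_eq]; norm_num⟩
  | @tail b c hdb hbc ih =>
    obtain ⟨k, hk⟩ := ih
    refine ⟨k+1, ?_⟩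
    rw [pow_succ, Matrix.mul_apply]
    apply Finset.sum_pos'
    · exact fun x _ => mul_nonneg (Bpow_nonneg k d x) (B_nonneg x c)
    · refine ⟨b, mem_univ b, ?_⟩
      have hB : B G b c = 1 := by unfold B; simp [hbc]
      rw [hB, mul_one]; exact hk

lemma oneB_nonneg (K : ℕ) (d e : G.Dart) : 0 ≤ ((1 + B G)^K) d e := by
  induction K generalizing d e with
  | zero =>
    rw [pow_zero, Matrix.one_apply]
    by_cases hde : d = e <;> simp [hde]
  | succ K ih =>
    rw [pow_succ, Matrix.mul_apply]
    refine Finset.sum_nonneg (fun x _ => mul_nonneg (ih d x) ?_)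
    rw [Matrix.add_apply]
    have h1 : (0:ℝ) ≤ (1 : Matrix G.Dart G.Dart ℝ) x e := by
      rw [Matrix.one_apply]; by_cases hde : x = e <;> simp [hde]
    linarith [B_nonneg x e]

private lemma pos_pos_of_mul_pos {a b : ℝ} (ha : 0 ≤ a) (hb : 0 ≤ b) (hab : 0 < a * b) :
    0 < a ∧ 0 < b := by
  rcases ha.lt_or_eq with h | h
  · rcases hb.lt_or_eq with h' | h'
    · exact ⟨h, h'⟩
    · rw [← h', mul_zero] at hab; exact absurd hab (lt_irrefl 0)
  · rw [← h, zero_mul] at hab; exact absurd hab (lt_irrefl 0)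

lemma oneB_pos {K k : ℕ} (hkK : k ≤ K) {d e : G.Dart} (hk : 0 < ((B G)^k) d e) :
    0 < ((1 + B G)^K) d e := by
  induction K generalizing k d e with
  | zero =>
    have hk0 : k = 0 := by omega
    subst hk0
    simpa using hk
  | succ K ih =>
    rw [pow_succ, Matrix.mul_apply]
    have hnn : ∀ x ∈ (univ : Finset G.Dart),
        0 ≤ ((1 + B G)^K) d x * (1 + B G) x e := by
      intro x _
      refine mul_nonneg (oneB_nonneg K d x) ?_
      rw [Matrix.add_apply]
      have h1 : (0:ℝ) ≤ (1 : Matrix G.Dart G.Dart ℝ) x e := by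
        rw [Matrix.one_apply]; by_cases hde : x = e <;> simp [hde]
      linarith [B_nonneg x e]
    rcases Nat.lt_or_ge k (K+1) with hlt | hge
    · apply Finset.sum_pos' hnn
      refine ⟨e, mem_univ e, ?_⟩
      have h1 : 0 < ((1 + B G)^K) d e := ih (by omega) hk
      have h2 : (0:ℝ) < (1 + B G) e e := by
        rw [Matrix.add_apply, Matrix.one_apply_eq]
        linarith [B_nonneg e e]
      exact mul_pos h1 h2
    · have hkk : k = K + 1 := by omega
      subst hkk
      rw [pow_succ, Matrix.mul_apply] at hk
      have hex : ∃ x, 0 < ((B G)^K) d x * B G x e := by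
        by_contra hcon
        push_neg at hcon
        have hle : ∑ x, ((B G)^K) d x * B G x e ≤ 0 :=
          Finset.sum_nonpos (fun x _ => hcon x)
        linarith
      obtain ⟨x, hx⟩ := hex
      obtain ⟨hx1, hx2⟩ := pos_pos_of_mul_pos (Bpow_nonneg K d x) (B_nonneg x e) hx
      apply Finset.sum_pos' hnn
      refine ⟨x, mem_univ x, ?_⟩
      refine mul_pos (ih (le_refl K) hx1) ?_
      rw [Matrix.add_apply]
      have h1 : (0:ℝ) ≤ (1 : Matrix G.Dart G.Dart ℝ) x e := by
        rw [Matrix.one_apply]; by_cases hde : x = e <;> simp [hde]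
      linarith

lemma exists_PF (h : NBIrreducible G) :
    ∃ (z : G.Dart → ℝ) (lam : ℝ), (∀ d, 0 < z d) ∧ (B G).mulVec z = lam • z := by
  classical
  have hdeg := h.2.1
  obtain ⟨d0⟩ := Fintype.card_pos_iff.mp (card_dart_pos h)
  have hreach : ∀ p : G.Dart × G.Dart, ∃ k, 0 < ((B G)^k) p.1 p.2 :=
    fun p => rtg_Bpow_pos (strong_conn h p.1 p.2)
  choose kf hkf using hreach
  set K : ℕ := Finset.sup univ kf with hK
  set M : Matrix G.Dart G.Dart ℝ := (1 + B G)^K with hM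
  have hMpos : ∀ d e, 0 < M d e := fun d e =>
    oneB_pos (Finset.le_sup (mem_univ (d,e))) (hkf (d,e))
  have hcomm : B G * M = M * B G :=
    ((Commute.one_right (B G)).add_right (Commute.refl (B G))).pow_right K
  set Δ : Set (G.Dart → ℝ) := stdSimplex ℝ G.Dart with hΔ
  have hcont : Continuous fun u : G.Dart → ℝ => M.mulVec u := by
    apply continuous_pi
    intro d
    simp only [Matrix.mulVec, dotProduct]
    exact continuous_finset_sum _ (fun e _ => continuous_const.mul (continuous_apply e))
  set Kset : Set (G.Dart → ℝ) := (fun u => M.mulVec u) '' Δ with hKset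
  have hKcompact : IsCompact Kset := (isCompact_stdSimplex ℝ G.Dart).image hcont
  have hKne : Kset.Nonempty := by
    refine ⟨M.mulVec (fun e => if e = d0 then 1 else 0), ⟨_, ⟨?_, ?_⟩, rfl⟩⟩
    · intro x; by_cases hx : x = d0 <;> simp [hx]
    · simp
  have hKpos : ∀ z ∈ Kset, ∀ e, 0 < z e := by
    rintro z ⟨u, hu, rfl⟩ e
    have hupos : ∃ x, 0 < u x := by
      by_contra hcon
      push_neg at hcon
      have h1 : ∑ x, u x ≤ 0 := Finset.sum_nonpos (fun x _ => hcon x)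
      rw [hu.2] at h1
      linarith
    obtain ⟨x, hx⟩ := hupos
    apply Finset.sum_pos'
    · exact fun y _ => mul_nonneg (hMpos e y).le (hu.1 y)
    · exact ⟨x, mem_univ x, mul_pos (hMpos e x) hx⟩
  have huniv : (univ : Finset G.Dart).Nonempty := ⟨d0, mem_univ d0⟩
  set f : (G.Dart → ℝ) → ℝ := fun z => univ.inf' huniv (fun e => (B G).mulVec z e / z e)
    with hf
  have hfcont : ContinuousOn f {z : G.Dart → ℝ | ∀ e, 0 < z e} := by
    apply ContinuousOn.finset_inf'_apply huniv
    intro e _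
    apply ContinuousOn.div
    · apply Continuous.continuousOn
      simp only [Matrix.mulVec, dotProduct]
      exact continuous_finset_sum _ (fun x _ => continuous_const.mul (continuous_apply x))
    · exact (continuous_apply e).continuousOn
    · intro z hz
      exact (hz e).ne'
  have hsubset : Kset ⊆ {z : G.Dart → ℝ | ∀ e, 0 < z e} := fun z hz => hKpos z hz
  obtain ⟨zs, hzsK, hzsmax⟩ := hKcompact.exists_isMaxOn hKne (hfcont.mono hsubset)
  set lam : ℝ := f zs with hlam
  have hzspos : ∀ e, 0 < zs e := hKpos zs hzsK
  have hsub : ∀ e, lam * zs e ≤ (B G).mulVec zs e := by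
    intro e
    have h1 : lam ≤ (B G).mulVec zs e / zs e := Finset.inf'_le _ (mem_univ e)
    rw [le_div_iff₀ (hzspos e)] at h1
    linarith [h1]
  -- claim equality
  by_cases heq : (B G).mulVec zs = lam • zs
  · exact ⟨zs, lam, hzspos, heq⟩
  · exfalso
    -- s ≥ 0, s ≠ 0
    set s : G.Dart → ℝ := (B G).mulVec zs - lam • zs with hs
    have hsnn : ∀ e, 0 ≤ s e := by
      intro e
      simp only [hs, Pi.sub_apply, Pi.smul_apply, smul_eq_mul]
      linarith [hsub e]
    have hsne : ∃ e, 0 < s e := by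
      by_contra hcon
      push_neg at hcon
      apply heq
      funext e
      have h1 := le_antisymm (hcon e) (hsnn e)
      simp only [hs, Pi.sub_apply, Pi.smul_apply, smul_eq_mul] at h1
      simp only [Pi.smul_apply, smul_eq_mul]
      linarith
    obtain ⟨e1, he1⟩ := hsne
    -- normalized zs is in the simplex
    set c : ℝ := (∑ x, zs x)⁻¹ with hc
    have hsumpos : 0 < ∑ x, zs x := Finset.sum_pos (fun x _ => hzspos x) huniv
    have hcpos : 0 < c := inv_pos.mpr hsumpos
    have humem : (c • zs) ∈ Δ := by
      constructor
      · intro x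
        simp only [Pi.smul_apply, smul_eq_mul]
        exact mul_nonneg hcpos.le (hzspos x).le
      · simp only [Pi.smul_apply, smul_eq_mul]
        rw [← Finset.mul_sum, hc, inv_mul_cancel₀ hsumpos.ne']
    set z' : G.Dart → ℝ := M.mulVec (c • zs) with hz'
    have hz'K : z' ∈ Kset := ⟨c • zs, humem, rfl⟩
    have hz'pos : ∀ e, 0 < z' e := hKpos z' hz'K
    -- B z' - lam z' = c • M.mulVec s > 0
    have hkey : ∀ e, lam * z' e < (B G).mulVec z' e := by
      intro e
      have hBz' : (B G).mulVec z' = M.mulVec ((B G).mulVec (c • zs)) := by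
        rw [hz', Matrix.mulVec_mulVec, Matrix.mulVec_mulVec, hcomm]
      have hdiff : (B G).mulVec z' - lam • z' = c • M.mulVec s := by
        have e1 : (B G).mulVec (c • zs) = c • (B G).mulVec zs := Matrix.mulVec_smul _ _ _
        have e2 : M.mulVec (c • zs) = c • M.mulVec zs := Matrix.mulVec_smul _ _ _
        rw [hBz', hz', e1, e2, Matrix.mulVec_smul, smul_comm lam c, ← smul_sub]
        congr 1
        rw [hs, Matrix.mulVec_sub, Matrix.mulVec_smul]
      have hMs : 0 < M.mulVec s e := by
        apply Finset.sum_pos'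
        · exact fun x _ => mul_nonneg (hMpos e x).le (hsnn x)
        · exact ⟨e1, mem_univ e1, mul_pos (hMpos e e1) he1⟩
      have := congrFun hdiff e
      simp only [Pi.sub_apply, Pi.smul_apply, smul_eq_mul] at this
      nlinarith
    have hflt : lam < f z' := by
      rw [hf, Finset.lt_inf'_iff]
      intro e _
      rw [lt_div_iff₀ (hz'pos e)]
      linarith [hkey e]
    have := hzsmax hz'K
    simp only [Set.mem_setOf_eq] at this
    rw [← hlam] at this
    linarith

/-! ### List walks, cycles, and the coboundary from the cycle condition -/

lemma rtg_chain {a b : G.Dart} (h : Relation.ReflTransGen (Step G) a b) :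
    ∃ l : List G.Dart, l.Chain' (Step G) ∧ l.head? = some a ∧ l.getLast? = some b := by
  induction h with
  | refl => exact ⟨[a], List.isChain_singleton a, rfl, rfl⟩
  | @tail c d hag hstep ih =>
    obtain ⟨l, hch, hhd, hlast⟩ := ih
    have hlne : l ≠ [] := by intro hc; rw [hc] at hhd; simp at hhd
    refine ⟨l ++ [d], ?_, ?_, ?_⟩
    · rw [List.Chain', List.isChain_append]
      refine ⟨hch, List.isChain_singleton d, ?_⟩
      intro x hx y hy
      rw [hlast, Option.mem_some_iff] at hx
      simp only [List.head?_cons, Option.mem_some_iff] at hy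
      rw [← hx, ← hy]
      exact hstep
    · rw [List.head?_append, hhd]; rfl
    · rw [List.getLast?_concat]

lemma map_out_prod_pos (l : List G.Dart) (hdeg : ∀ v, 2 ≤ G.degree v) :
    0 < (l.map (fun d => (outdeg G d : ℝ))).prod := by
  apply List.prod_pos
  intro x hx
  rw [List.mem_map] at hx
  obtain ⟨d, -, rfl⟩ := hx
  exact outdeg_cast_pos hdeg d

lemma CC_list (h : NBIrreducible G) (hcc : CycleCondition G) {l : List G.Dart} (hne : l ≠ [])
    (hch : l.Chain' (Step G)) (hwrap : Step G (l.getLast hne) (l.head hne)) :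
    (l.map (fun d => (outdeg G d : ℝ))).prod = Lambda G ^ l.length := by
  obtain ⟨n, hn⟩ : ∃ n, l.length = n + 1 := ⟨l.length - 1, by
    have := List.length_pos_iff.mpr hne; omega⟩
  set C : Fin (n+1) → G.Dart := fun i => l.get (Fin.cast hn.symm i) with hC
  have hcyc : IsNBCycle G C := by
    intro i
    by_cases hi : i.1 < n
    · have h1 : (i+1).1 = i.1 + 1 :=
        Fin.val_add_one_of_lt (by rw [Fin.lt_def, Fin.val_last]; omega)
      have hstep := List.isChain_iff_getElem.mp hch i.1 (by omega)
      have e1 : C i = l.get ⟨i.1, by omega⟩ := congrArg l.get (Fin.ext rfl)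
      have e2 : C (i+1) = l.get ⟨i.1+1, by omega⟩ := congrArg l.get (Fin.ext h1)
      rw [e1, e2]; exact hstep
    · have hi' : i.1 = n := by omega
      have hil : i = Fin.last n := Fin.ext (by rw [Fin.val_last]; exact hi')
      have h0 : i + 1 = 0 := by rw [hil]; exact Fin.last_add_one n
      have e1 : C i = l.getLast hne := by
        rw [List.getLast_eq_getElem]
        exact congrArg l.get (Fin.ext (by simp [hi', hn]))
      have e2 : C (i+1) = l.head hne := by
        rw [h0, ← List.get_mk_zero (List.length_pos_iff.mpr hne)]
        exact congrArg l.get (Fin.ext (by simp))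
      rw [e1, e2]; exact hwrap
  have hprod := hcc n C hcyc
  calc (l.map (fun d => (outdeg G d : ℝ))).prod
      = ∏ i : Fin l.length, (outdeg G (l.get i) : ℝ) := by
        conv_lhs => rw [← List.ofFn_get l]
        rw [List.map_ofFn, List.prod_ofFn]
        rfl
    _ = ∏ i : Fin (n+1), (outdeg G (C i) : ℝ) :=
        (Equiv.prod_comp (finCongr hn.symm) (fun j => (outdeg G (l.get j) : ℝ))).symm
    _ = Lambda G ^ (n+1) := hprod
    _ = Lambda G ^ l.length := by rw [hn]

/-- Well-definedness of walk weights under the cycle condition. -/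
lemma walk_weight (h : NBIrreducible G) (hcc : CycleCondition G) {a b : G.Dart}
    (l1 l2 : List G.Dart)
    (hch1 : l1.Chain' (Step G)) (hch2 : l2.Chain' (Step G))
    (hh1 : l1.head? = some a) (hh2 : l2.head? = some a)
    (hl1 : l1.getLast? = some b) (hl2 : l2.getLast? = some b) :
    (l1.map (fun d => (outdeg G d : ℝ))).prod / Lambda G ^ l1.length
      = (l2.map (fun d => (outdeg G d : ℝ))).prod / Lambda G ^ l2.length := by
  classical
  have hdeg := h.2.1
  have hL := lambda_pos h
  -- construct a return walk from b to a of length ≥ 1 starting with a genuine step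
  obtain ⟨f0, hf0⟩ := exists_succ hdeg b
  obtain ⟨r', hr', hr'h, hr'l⟩ := rtg_chain (strong_conn h f0 a)
  have hr'ne : r' ≠ [] := by intro hc; rw [hc] at hr'h; simp at hr'h
  set mid : List G.Dart := r'.dropLast with hmid
  have hsplit : mid ++ [a] = r' := by
    have h1 := List.dropLast_append_getLast hr'ne
    have h2 : r'.getLast hr'ne = a := by
      have := List.getLast?_eq_getLast hr'ne
      rw [hr'l] at this
      exact (Option.some.inj this).symm
    rw [h2] at h1
    exact h1
  have hmidch : mid.Chain' (Step G) ∧ ∀ x ∈ mid.getLast?, Step G x a := by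
    have := hr'
    rw [← hsplit, List.Chain', List.isChain_append] at this
    obtain ⟨hc1, -, hc3⟩ := this
    exact ⟨hc1, fun x hx => hc3 x hx a (by simp)⟩
  have hmidhead : mid = [] → f0 = a := by
    intro hmide
    rw [hmide] at hsplit
    simp at hsplit
    rw [← hsplit] at hr'h
    simp only [List.head?_cons, Option.some.injEq] at hr'h
    exact hr'h.symm
  have hmidhead2 : mid ≠ [] → mid.head? = some f0 := by
    intro hmidne
    rw [← hsplit, List.head?_append] at hr'h
    cases hm : mid.head? with
    | none => exact absurd (List.head?_eq_none_iff.mp hm) hmidne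
    | some x => rw [hm] at hr'h; simp at hr'h; rw [hr'h]
  -- generic: close any walk from a to b with mid
  have hclose : ∀ (l : List G.Dart), l.Chain' (Step G) → l.head? = some a →
      l.getLast? = some b →
      (l.map (fun d => (outdeg G d : ℝ))).prod
        * (mid.map (fun d => (outdeg G d : ℝ))).prod
        = Lambda G ^ (l.length + mid.length) := by
    intro l hch hhd hlast
    have hlne : l ≠ [] := by intro hc; rw [hc] at hhd; simp at hhd
    have hlget : l.getLast hlne = b := by
      have := List.getLast?_eq_getLast hlne
      rw [hlast] at this
      exact (Option.some.inj this).symm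
    have hlhead : l.head hlne = a := by
      have := List.head?_eq_head hlne
      rw [hhd] at this
      exact (Option.some.inj this).symm
    set c : List G.Dart := l ++ mid with hc
    have hcne : c ≠ [] := by
      rw [hc]; intro hcon
      exact hlne (List.append_eq_nil_iff.mp hcon).1
    have hcch : c.Chain' (Step G) := by
      rw [hc, List.Chain', List.isChain_append]
      refine ⟨hch, hmidch.1, ?_⟩
      intro x hx y hy
      rw [hlast, Option.mem_some_iff] at hx
      subst hx
      have hmidne : mid ≠ [] := by
        intro hcon; rw [hcon] at hy; simp at hy
      rw [hmidhead2 hmidne, Option.mem_some_iff] at hy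
      subst hy
      exact hf0
    have hcwrap : Step G (c.getLast hcne) (c.head hcne) := by
      have hchead : c.head hcne = a := by
        have e1 : c.head hcne = l.head hlne := List.head_append_of_ne_nil hlne
        rw [e1, hlhead]
      by_cases hmide : mid = []
      · have hclast : c.getLast hcne = b := by
          have e1 : c.getLast hcne = l.getLast hlne := List.getLast_append_left hcne hmide
          rw [e1, hlget]
        rw [hclast, hchead]
        have hfa := hmidhead hmide
        rw [← hfa]
        exact hf0
      · have hclast : c.getLast hcne = mid.getLast hmide :=
          List.getLast_append_of_ne_nil hcne hmide
        rw [hclast, hchead]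
        refine hmidch.2 _ ?_
        rw [Option.mem_def]
        exact List.getLast?_eq_getLast_of_ne_nil hmide
    have hmain := CC_list h hcc hcne hcch hcwrap
    rw [hc, List.map_append, List.prod_append, List.length_append] at hmain
    exact hmain
  have h1 := hclose l1 hch1 hh1 hl1
  have h2 := hclose l2 hch2 hh2 hl2
  have hm : (0:ℝ) < (mid.map (fun d => (outdeg G d : ℝ))).prod := map_out_prod_pos mid hdeg
  have hpow : ∀ k : ℕ, (0:ℝ) < Lambda G ^ k := fun k => pow_pos hL k
  rw [pow_add] at h1 h2
  have e1 : (l1.map (fun d => (outdeg G d : ℝ))).prod / Lambda G ^ l1.length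
      = Lambda G ^ mid.length / (mid.map (fun d => (outdeg G d : ℝ))).prod := by
    rw [div_eq_div_iff (hpow _).ne' hm.ne', h1]; ring
  have e2 : (l2.map (fun d => (outdeg G d : ℝ))).prod / Lambda G ^ l2.length
      = Lambda G ^ mid.length / (mid.map (fun d => (outdeg G d : ℝ))).prod := by
    rw [div_eq_div_iff (hpow _).ne' hm.ne', h2]; ring
  rw [e1, e2]

lemma CC_cobound (h : NBIrreducible G) (hcc : CycleCondition G) : ∃ z, Cobound G z := by
  classical
  have hdeg := h.2.1
  have hL := lambda_pos h
  obtain ⟨d0⟩ := Fintype.card_pos_iff.mp (card_dart_pos h)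
  have hwalks : ∀ e : G.Dart, ∃ l : List G.Dart,
      l.Chain' (Step G) ∧ l.head? = some d0 ∧ l.getLast? = some e :=
    fun e => rtg_chain (strong_conn h d0 e)
  choose wlk hwc hwh hwl using hwalks
  set z : G.Dart → ℝ := fun e =>
    Lambda G ^ ((wlk e).length - 1)
      / ((wlk e).dropLast.map (fun x => (outdeg G x : ℝ))).prod with hz
  have hzpos : ∀ e, 0 < z e := fun e =>
    div_pos (pow_pos hL _) (map_out_prod_pos _ hdeg)
  refine ⟨z, hzpos, ?_⟩
  intro d e hde
  have hwne : ∀ x : G.Dart, wlk x ≠ [] := by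
    intro x hc
    have := hwh x; rw [hc] at this; simp at this
  have hlen1 : ∀ x : G.Dart, 1 ≤ (wlk x).length := fun x => List.length_pos_iff.mpr (hwne x)
  obtain ⟨md, hmd⟩ : ∃ md, (wlk d).length = md + 1 := ⟨(wlk d).length - 1, by have := hlen1 d; omega⟩
  obtain ⟨me, hme⟩ : ∃ me, (wlk e).length = me + 1 := ⟨(wlk e).length - 1, by have := hlen1 e; omega⟩
  have hdget : (wlk d).getLast (hwne d) = d := by
    have h1 := List.getLast?_eq_getLast_of_ne_nil (hwne d)
    rw [hwl d] at h1
    exact (Option.some.inj h1).symm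
  have heget : (wlk e).getLast (hwne e) = e := by
    have h1 := List.getLast?_eq_getLast_of_ne_nil (hwne e)
    rw [hwl e] at h1
    exact (Option.some.inj h1).symm
  set l' : List G.Dart := wlk d ++ [e] with hl'
  have hch' : l'.Chain' (Step G) := by
    rw [hl', List.Chain', List.isChain_append]
    refine ⟨hwc d, List.isChain_singleton e, ?_⟩
    intro x hx y hy
    rw [hwl d, Option.mem_some_iff] at hx
    simp only [List.head?_cons, Option.mem_some_iff] at hy
    subst hx; subst hy
    exact hde
  have hhd' : l'.head? = some d0 := by rw [hl', List.head?_append, hwh d]; rfl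
  have hlast' : l'.getLast? = some e := by rw [hl', List.getLast?_concat]
  have hww := walk_weight h hcc l' (wlk e) hch' (hwc e) hhd' (hwh e) hlast' (hwl e)
  -- notation
  set Pd : ℝ := ((wlk d).dropLast.map (fun x => (outdeg G x : ℝ))).prod with hPd
  set Pe : ℝ := ((wlk e).dropLast.map (fun x => (outdeg G x : ℝ))).prod with hPe
  have hPdpos : 0 < Pd := map_out_prod_pos _ hdeg
  have hPepos : 0 < Pe := map_out_prod_pos _ hdeg
  have hod : (0:ℝ) < (outdeg G d : ℝ) := outdeg_cast_pos hdeg d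
  have hoe : (0:ℝ) < (outdeg G e : ℝ) := outdeg_cast_pos hdeg e
  have hprodd : ((wlk d).map (fun x => (outdeg G x : ℝ))).prod = Pd * (outdeg G d : ℝ) := by
    conv_lhs => rw [← List.dropLast_append_getLast (hwne d)]
    rw [List.map_append, List.prod_append, hdget]
    simp [hPd]
  have hprode : ((wlk e).map (fun x => (outdeg G x : ℝ))).prod = Pe * (outdeg G e : ℝ) := by
    conv_lhs => rw [← List.dropLast_append_getLast (hwne e)]
    rw [List.map_append, List.prod_append, heget]
    simp [hPe]
  have hprodl' : (l'.map (fun x => (outdeg G x : ℝ))).prod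
      = Pd * (outdeg G d : ℝ) * (outdeg G e : ℝ) := by
    rw [hl', List.map_append, List.prod_append, hprodd]
    simp
  have hlenl' : l'.length = md + 2 := by
    rw [hl', List.length_append, hmd]
    rfl
  rw [hprodl', hprode, hlenl', hme] at hww
  have hLpos : ∀ k : ℕ, (0:ℝ) < Lambda G ^ k := fun k => pow_pos hL k
  rw [div_eq_div_iff (hLpos _).ne' (hLpos _).ne'] at hww
  -- hww : Pd * od * oe * Λ^(me+1) = Pe * oe * Λ^(md+2)
  have hfinal : Pd * (outdeg G d : ℝ) * Lambda G ^ me = Pe * Lambda G ^ md * Lambda G := by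
    have hcc2 : (Pd * (outdeg G d : ℝ) * Lambda G ^ me) * ((outdeg G e : ℝ) * Lambda G)
        = (Pe * Lambda G ^ md * Lambda G) * ((outdeg G e : ℝ) * Lambda G) := by
      rw [pow_succ, pow_add] at hww
      nlinarith [hww]
    exact mul_right_cancel₀ (by positivity) hcc2
  -- goal: od * z e = Λ * z d
  show (outdeg G d : ℝ) * z e = Lambda G * z d
  rw [hz]
  simp only
  rw [hmd, hme]
  simp only [Nat.add_sub_cancel]
  rw [← hPd, ← hPe]
  rw [← mul_div_assoc, ← mul_div_assoc, div_eq_div_iff hPepos.ne' hPdpos.ne']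
  linear_combination hfinal

lemma perron_iff_CC (h : NBIrreducible G) :
    perron (B G) = Lambda G ↔ CycleCondition G := by
  constructor
  · intro hp
    obtain ⟨z, lam, hzpos, heig⟩ := exists_PF h
    have hpl : perron (B G) = lam := perron_eq_of_eigen h hzpos heig
    have hlamL : lam = Lambda G := by rw [← hpl, hp]
    exact cobound_CC h ((eigen_ge_lambda h hzpos heig).2 hlamL)
  · intro hcc
    obtain ⟨z, hzc⟩ := CC_cobound h hcc
    exact perron_eq_of_eigen h hzc.1 (cobound_eigen h hzc)

/-! ### Suspended path condition implies cycle condition -/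

open Fin.CommRing in
lemma SPC_to_CC (h : NBIrreducible G) (hspc : SuspendedPathCondition G) :
    CycleCondition G := by
  intro n C hC
  classical
  have hdeg := h.2.1
  have hL := lambda_pos h
  obtain ⟨i0, hi0⟩ := exists_branch_of_cycle h hC
  have hex : ∀ i : Fin (n+1), ∃ t : ℕ, 1 < outdeg G (C (i + ((t : ℕ) : Fin (n+1)))) := by
    intro i
    refine ⟨(i0 - i).1, ?_⟩
    rw [Fin.cast_val_eq_self, add_sub_cancel]
    exact hi0
  set a : Fin (n+1) → ℕ := fun i => Nat.find (hex i) with ha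
  have haspec : ∀ i, 1 < outdeg G (C (i + ((a i : ℕ) : Fin (n+1)))) :=
    fun i => Nat.find_spec (hex i)
  have hamin : ∀ i (t : ℕ), t < a i → ¬ 1 < outdeg G (C (i + ((t : ℕ) : Fin (n+1)))) :=
    fun i t ht => Nat.find_min (hex i) ht
  have hcast : ∀ (i : Fin (n+1)) (t : ℕ),
      C (i + (((t+1 : ℕ)) : Fin (n+1))) = C ((i + 1) + ((t : ℕ) : Fin (n+1))) := by
    intro i t
    congr 1
    push_cast
    ring
  set hfun : Fin (n+1) → ℝ := fun i =>
    Lambda G ^ (a i) / Real.sqrt ((outdeg G (C (i + ((a i : ℕ) : Fin (n+1)))) : ℝ)) with hh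
  have hbpos : ∀ i, (0:ℝ) < ((outdeg G (C (i + ((a i : ℕ) : Fin (n+1))))) : ℝ) := by
    intro i
    have := haspec i
    exact_mod_cast Nat.lt_of_lt_of_le Nat.zero_lt_one (le_of_lt this)
  have hpos : ∀ i, 0 < hfun i := fun i =>
    div_pos (pow_pos hL _) (Real.sqrt_pos.mpr (hbpos i))
  have hrec : ∀ i, (outdeg G (C i) : ℝ) * hfun i = Lambda G * hfun (i+1) := by
    intro i
    by_cases hbr : 1 < outdeg G (C i)
    · -- branch case
      have ha0 : a i = 0 := by
        rw [ha]
        simp only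
        rw [Nat.find_eq_zero]
        simpa using hbr
      set b : ℕ := a (i+1) with hb
      have hnext : 1 < outdeg G (C ((i + 1) + ((b : ℕ) : Fin (n+1)))) := haspec (i+1)
      set Q : Fin (b+1) → G.Dart := fun t => C ((i + 1) + ((t.1 : ℕ) : Fin (n+1))) with hQ
      have hQsp : IsSuspendedPath G Q := by
        refine ⟨?_, ?_, ?_, ?_, ?_⟩
        · intro t
          have e2 : Q t.succ = C (((i + 1) + ((t.1 : ℕ) : Fin (n+1))) + 1) := by
            show C ((i + 1) + (((t.1+1 : ℕ)) : Fin (n+1))) = _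
            congr 1
            push_cast
            ring
          have e1 : Q t.castSucc = C ((i + 1) + ((t.1 : ℕ) : Fin (n+1))) := by
            show C ((i + 1) + (((t.castSucc.1 : ℕ)) : Fin (n+1))) = _
            rw [Fin.coe_castSucc]
          rw [e1, e2]
          exact hC _
        · intro t
          have e1 : Q t.castSucc = C ((i + 1) + ((t.1 : ℕ) : Fin (n+1))) := by
            show C ((i + 1) + (((t.castSucc.1 : ℕ)) : Fin (n+1))) = _
            rw [Fin.coe_castSucc]
          rw [e1]
          have h1 := hamin (i+1) t.1 t.2
          have h2 := outdeg_pos hdeg (C ((i + 1) + ((t.1 : ℕ) : Fin (n+1))))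
          omega
        · have e1 : Q (Fin.last b) = C ((i + 1) + ((b : ℕ) : Fin (n+1))) := by
            show C ((i + 1) + ((((Fin.last b).1 : ℕ)) : Fin (n+1))) = _
            rw [Fin.val_last]
          rw [e1]
          exact hnext
        · intro t
          have e2 : Q t.succ = C (((i + 1) + ((t.1 : ℕ) : Fin (n+1))) + 1) := by
            show C ((i + 1) + (((t.1+1 : ℕ)) : Fin (n+1))) = _
            congr 1
            push_cast
            ring
          rw [e2]
          have hstep := hC ((i + 1) + ((t.1 : ℕ) : Fin (n+1)))
          rw [← step_outdeg_eq_indeg hstep]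
          have h1 := hamin (i+1) t.1 t.2
          have h2 := outdeg_pos hdeg (C ((i + 1) + ((t.1 : ℕ) : Fin (n+1))))
          omega
        · have e1 : Q 0 = C (i + 1) := by
            show C ((i + 1) + (((0:ℕ)) : Fin (n+1))) = _
            rw [Nat.cast_zero, add_zero]
          rw [e1, ← step_outdeg_eq_indeg (hC i)]
          exact hbr
      have hspcQ := hspc b Q hQsp
      have eQl : Q (Fin.last b) = C ((i + 1) + ((b : ℕ) : Fin (n+1))) := by
        show C ((i + 1) + ((((Fin.last b).1 : ℕ)) : Fin (n+1))) = _
        rw [Fin.val_last]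
      have eQ0 : Q 0 = C (i + 1) := by
        show C ((i + 1) + (((0:ℕ)) : Fin (n+1))) = _
        rw [Nat.cast_zero, add_zero]
      rw [eQl, eQ0, ← step_outdeg_eq_indeg (hC i)] at hspcQ
      -- hspcQ : out (C j) * out (C i) = Λ ^ (2*(b+1))
      set oCi : ℝ := (outdeg G (C i) : ℝ) with hoCi
      set oCj : ℝ := (outdeg G (C ((i + 1) + ((b : ℕ) : Fin (n+1)))) : ℝ) with hoCj
      have hoCipos : 0 < oCi := by
        rw [hoCi]
        exact_mod_cast Nat.lt_of_lt_of_le Nat.zero_lt_one (le_of_lt hbr)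
      have hoCjpos : 0 < oCj := by
        rw [hoCj]
        exact_mod_cast Nat.lt_of_lt_of_le Nat.zero_lt_one (le_of_lt hnext)
      have hsq : Real.sqrt oCi * Real.sqrt oCj = Lambda G ^ (b+1) := by
        rw [← Real.sqrt_mul hoCipos.le]
        have hsq2 : oCi * oCj = (Lambda G ^ (b+1))^2 := by
          have h2 : oCi * oCj = Lambda G ^ (2*(b+1)) := by rw [mul_comm]; exact hspcQ
          rw [h2, ← pow_mul]
          congr 1
          ring
        rw [hsq2, Real.sqrt_sq (pow_pos hL _).le]
      -- rewrite hfun i and hfun (i+1)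
      have hfi : hfun i = 1 / Real.sqrt oCi := by
        rw [hh]
        simp only
        rw [ha0, pow_zero]
        congr 2
        rw [Nat.cast_zero, add_zero]
      have hfi1 : hfun (i+1) = Lambda G ^ b / Real.sqrt oCj := by
        rw [hh]
      rw [hfi, hfi1, mul_one_div, Real.div_sqrt]
      rw [← mul_div_assoc, ← pow_succ']
      rw [← hsq, mul_div_assoc, div_self (Real.sqrt_pos.mpr hoCjpos).ne', mul_one]
    · -- non-branch case
      have h1 : outdeg G (C i) = 1 := by
        have := outdeg_pos hdeg (C i)
        omega
      have hane : a i ≠ 0 := by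
        intro hc
        have := haspec i
        rw [hc] at this
        rw [Nat.cast_zero, add_zero] at this
        exact hbr this
      obtain ⟨s, hs⟩ : ∃ s, a i = s + 1 := ⟨a i - 1, by omega⟩
      have hP1 : 1 < outdeg G (C ((i+1) + ((s : ℕ) : Fin (n+1)))) := by
        have := haspec i
        rw [hs, hcast i s] at this
        exact this
      have hle1 : a (i+1) ≤ s := Nat.find_min' (hex (i+1)) hP1
      have hP2 : 1 < outdeg G (C (i + (((a (i+1) + 1 : ℕ)) : Fin (n+1)))) := by
        rw [hcast i (a (i+1))]
        exact haspec (i+1)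
      have hle2 : a i ≤ a (i+1) + 1 := Nat.find_min' (hex i) hP2
      have haeq : a i = a (i+1) + 1 := by omega
      have hidx : C (i + ((a i : ℕ) : Fin (n+1)))
          = C ((i+1) + ((a (i+1) : ℕ) : Fin (n+1))) := by
        rw [haeq, hcast i (a (i+1))]
      have hfi : hfun i = Lambda G ^ (a (i+1) + 1)
          / Real.sqrt ((outdeg G (C ((i+1) + ((a (i+1) : ℕ) : Fin (n+1)))) : ℝ)) := by
        rw [hh]
        simp only
        rw [hidx, haeq]
      have hfi1 : hfun (i+1) = Lambda G ^ (a (i+1))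
          / Real.sqrt ((outdeg G (C ((i+1) + ((a (i+1) : ℕ) : Fin (n+1)))) : ℝ)) := by
        rw [hh]
      rw [hfi, hfi1, h1]
      rw [Nat.cast_one, one_mul, pow_succ']
      ring
  -- conclude: product telescopes
  have key : ∀ i, (outdeg G (C i) : ℝ) = Lambda G * hfun (i+1) / hfun i := by
    intro i
    rw [eq_div_iff (hpos i).ne']
    exact hrec i
  rw [Finset.prod_congr rfl (fun i _ => key i), Finset.prod_div_distrib,
    Finset.prod_mul_distrib, Finset.prod_const]
  have hre : ∏ i : Fin (n+1), hfun (i+1) = ∏ i : Fin (n+1), hfun i :=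
    Equiv.prod_comp (Equiv.addRight (1 : Fin (n+1))) hfun
  have hP : (∏ i : Fin (n+1), hfun i) ≠ 0 := (Finset.prod_pos fun i _ => hpos i).ne'
  rw [hre, mul_div_assoc, div_self hP, mul_one, Finset.card_univ, Fintype.card_fin]

/-! ### Cycle condition implies suspended path condition -/

private lemma getLast_of_getLast? {α : Type*} {l : List α} (hne : l ≠ []) {x : α}
    (hx : l.getLast? = some x) : l.getLast hne = x := by
  have h1 := List.getLast?_eq_getLast_of_ne_nil (l := l) hne
  rw [hx] at h1
  exact (Option.some.inj h1).symm

private lemma head_of_head? {α : Type*} {l : List α} (hne : l ≠ []) {x : α}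
    (hx : l.head? = some x) : l.head hne = x := by
  have h1 := List.head?_eq_head (l := l) hne
  rw [hx] at h1
  exact (Option.some.inj h1).symm

lemma CC_to_SPC (h : NBIrreducible G) (hcc : CycleCondition G) :
    SuspendedPathCondition G := by
  intro n P hP
  classical
  have hdeg := h.2.1
  have hL := lambda_pos h
  obtain ⟨hstepP, hout1, houtlast, hind1, hind0⟩ := hP
  have hcard1 : 1 < #(succs G (P (Fin.last n))) := by rw [card_succs]; exact houtlast
  obtain ⟨f1, hf1m, f2, hf2m, hf12⟩ := Finset.one_lt_card.mp hcard1
  have hf1 : Step G (P (Fin.last n)) f1 := mem_succs.mp hf1m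
  have hf2 : Step G (P (Fin.last n)) f2 := mem_succs.mp hf2m
  have hcard2 : 1 < #(succs G (P 0).symm) := by
    rw [card_succs, outdeg_symm]; exact hind0
  obtain ⟨g1, hg1m, g2, hg2m, hg12⟩ := Finset.one_lt_card.mp hcard2
  have hg1 : Step G (P 0).symm g1 := mem_succs.mp hg1m
  have hg2 : Step G (P 0).symm g2 := mem_succs.mp hg2m
  set Pb : Fin (n+1) → G.Dart := fun t => (P (Fin.rev t)).symm with hPb
  set lP : List G.Dart := List.ofFn P with hlP
  set lPb : List G.Dart := List.ofFn Pb with hlPb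
  obtain ⟨W, hWc, hWh, hWl⟩ := rtg_chain (strong_conn h f1 f2.symm)
  obtain ⟨W', hW'c, hW'h, hW'l⟩ := rtg_chain (strong_conn h g1 g2.symm)
  have hlPne : lP ≠ [] := by
    intro hc; have := congrArg List.length hc; rw [hlP] at this; simp at this
  have hlPbne : lPb ≠ [] := by
    intro hc; have := congrArg List.length hc; rw [hlPb] at this; simp at this
  have hWne : W ≠ [] := by intro hc; rw [hc] at hWh; simp at hWh
  have hW'ne : W' ≠ [] := by intro hc; rw [hc] at hW'h; simp at hW'h
  have hlPh : lP.head? = some (P 0) := by rw [hlP, List.ofFn_succ]; rfl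
  have hlPl : lP.getLast? = some (P (Fin.last n)) := by
    rw [hlP, List.ofFn_succ', List.concat_eq_append, List.getLast?_concat]
  have hlPbh : lPb.head? = some ((P (Fin.last n)).symm) := by
    rw [hlPb, List.ofFn_succ]
    have e : Pb 0 = (P (Fin.last n)).symm := by rw [hPb]; simp [Fin.rev_zero]
    rw [e]
    rfl
  have hlPbl : lPb.getLast? = some ((P 0).symm) := by
    rw [hlPb, List.ofFn_succ', List.concat_eq_append, List.getLast?_concat]
    have e : Pb (Fin.last n) = (P 0).symm := by rw [hPb]; simp [Fin.rev_last]
    rw [e]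
  have hlPc : lP.Chain' (Step G) := by
    rw [hlP, List.Chain', List.isChain_ofFn]
    intro i hi
    have hstep := hstepP ⟨i, by omega⟩
    have e1 : (⟨i, by omega⟩ : Fin n).castSucc = (⟨i, Nat.lt_of_succ_lt hi⟩ : Fin (n+1)) :=
      Fin.ext rfl
    have e2 : (⟨i, by omega⟩ : Fin n).succ = (⟨i+1, hi⟩ : Fin (n+1)) := Fin.ext rfl
    rw [e1, e2] at hstep
    exact hstep
  have hlPbc : lPb.Chain' (Step G) := by
    rw [hlPb, List.Chain', List.isChain_ofFn]
    intro i hi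
    have hj : n - (i+1) < n := by omega
    have hstep := step_symm (hstepP ⟨n - (i+1), hj⟩)
    have e1 : (⟨n - (i+1), hj⟩ : Fin n).succ
        = Fin.rev (⟨i, Nat.lt_of_succ_lt hi⟩ : Fin (n+1)) := by
      apply Fin.ext
      rw [Fin.val_succ, Fin.val_rev]
      simp only
      omega
    have e2 : (⟨n - (i+1), hj⟩ : Fin n).castSucc = Fin.rev (⟨i+1, hi⟩ : Fin (n+1)) := by
      apply Fin.ext
      rw [Fin.coe_castSucc, Fin.val_rev]
      simp only
      omega
    rw [e1, e2] at hstep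
    show Step G (Pb ⟨i, Nat.lt_of_succ_lt hi⟩) (Pb ⟨i+1, hi⟩)
    rw [hPb]
    exact hstep
  -- the big cycle
  set c1 : List G.Dart := lP ++ (W ++ (lPb ++ W')) with hc1
  have hc1ne : c1 ≠ [] := by
    rw [hc1]; intro hcon
    exact hlPne (List.append_eq_nil_iff.mp hcon).1
  have hc1c : c1.Chain' (Step G) := by
    rw [hc1, List.Chain', List.isChain_append]
    refine ⟨hlPc, ?_, ?_⟩
    · rw [List.isChain_append]
      refine ⟨hWc, ?_, ?_⟩
      · rw [List.isChain_append]
        refine ⟨hlPbc, hW'c, ?_⟩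
        intro x hx y hy
        rw [hlPbl, Option.mem_some_iff] at hx
        rw [hW'h, Option.mem_some_iff] at hy
        rw [← hx, ← hy]
        exact hg1
      · intro x hx y hy
        rw [hWl, Option.mem_some_iff] at hx
        rw [List.head?_append_of_ne_nil _ hlPbne, hlPbh, Option.mem_some_iff] at hy
        rw [← hx, ← hy]
        exact step_symm hf2
    · intro x hx y hy
      rw [hlPl, Option.mem_some_iff] at hx
      rw [List.head?_append_of_ne_nil _ hWne, hWh, Option.mem_some_iff] at hy
      rw [← hx, ← hy]
      exact hf1
  have hc1wrap : Step G (c1.getLast hc1ne) (c1.head hc1ne) := by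
    have hhead : c1.head hc1ne = P 0 := by
      have e1 : c1.head hc1ne = lP.head hlPne :=
        List.head_append_of_ne_nil hlPne
      rw [e1, head_of_head? hlPne hlPh]
    have hlast : c1.getLast hc1ne = g2.symm := by
      have hl3 : c1.getLast? = some g2.symm := by
        rw [hc1]
        simp only [List.getLast?_append]
        rw [hW'l]
        rfl
      exact getLast_of_getLast? hc1ne hl3
    rw [hhead, hlast]
    have := step_symm hg2
    rwa [SimpleGraph.Dart.symm_symm] at this
  have hWwrap : Step G (W.getLast hWne) (W.head hWne) := by
    rw [head_of_head? hWne hWh, getLast_of_getLast? hWne hWl]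
    refine ⟨?_, ?_⟩
    · rw [symm_snd]
      exact hf2.1.symm.trans hf1.1
    · intro hc
      rw [hc, SimpleGraph.Dart.symm_symm] at hf12
      exact hf12 rfl
  have hW'wrap : Step G (W'.getLast hW'ne) (W'.head hW'ne) := by
    rw [head_of_head? hW'ne hW'h, getLast_of_getLast? hW'ne hW'l]
    refine ⟨?_, ?_⟩
    · rw [symm_snd]
      exact hg2.1.symm.trans hg1.1
    · intro hc
      rw [hc, SimpleGraph.Dart.symm_symm] at hg12
      exact hg12 rfl
  have hCc1 := CC_list h hcc hc1ne hc1c hc1wrap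
  have hCW := CC_list h hcc hWne hWc hWwrap
  have hCW' := CC_list h hcc hW'ne hW'c hW'wrap
  have hprodlP : (lP.map (fun d => (outdeg G d : ℝ))).prod
      = (outdeg G (P (Fin.last n)) : ℝ) := by
    rw [hlP, List.map_ofFn, List.prod_ofFn, Fin.prod_univ_castSucc]
    have h1 : ∀ i : Fin n,
        ((fun d => (outdeg G d : ℝ)) ∘ P) i.castSucc = 1 := by
      intro i
      simp only [Function.comp]
      rw [hout1 i]
      norm_num
    rw [Finset.prod_congr rfl (fun i _ => h1 i), Finset.prod_const_one, one_mul]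
    rfl
  have hprodlPb : (lPb.map (fun d => (outdeg G d : ℝ))).prod = (indeg G (P 0) : ℝ) := by
    rw [hlPb, List.map_ofFn, List.prod_ofFn]
    have h0 : ∀ i : Fin (n+1),
        ((fun d => (outdeg G d : ℝ)) ∘ Pb) i = (indeg G (P (Fin.rev i)) : ℝ) := by
      intro i
      simp only [Function.comp, hPb]
      rw [outdeg_symm]
    rw [Finset.prod_congr rfl (fun i _ => h0 i)]
    have h2 : ∏ i : Fin (n+1), (indeg G (P (Fin.rev i)) : ℝ)
        = ∏ i : Fin (n+1), (indeg G (P i) : ℝ) :=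
      Equiv.prod_comp Fin.revPerm (fun j => (indeg G (P j) : ℝ))
    rw [h2, Fin.prod_univ_succ]
    have h3 : ∀ i : Fin n, ((indeg G (P i.succ)) : ℝ) = 1 := by
      intro i; rw [hind1 i]; norm_num
    rw [Finset.prod_congr rfl (fun i _ => h3 i), Finset.prod_const_one, mul_one]
  rw [hc1] at hCc1
  rw [List.map_append, List.prod_append, List.map_append, List.prod_append,
    List.map_append, List.prod_append] at hCc1
  rw [hprodlP, hprodlPb, hCW, hCW'] at hCc1
  have hlen2 : (lP ++ (W ++ (lPb ++ W'))).length
      = (n+1) + W.length + (n+1) + W'.length := by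
    simp only [List.length_append, hlP, hlPb, List.length_ofFn]
    omega
  rw [hlen2] at hCc1
  have hrhs : Lambda G ^ ((n+1) + W.length + (n+1) + W'.length)
      = Lambda G ^ (2*(n+1)) * (Lambda G ^ W.length * Lambda G ^ W'.length) := by
    rw [← pow_add, ← pow_add]
    congr 1
    ring
  rw [hrhs] at hCc1
  have hne' : (Lambda G ^ W.length * Lambda G ^ W'.length) ≠ 0 := by positivity
  apply mul_right_cancel₀ hne'
  calc (outdeg G (P (Fin.last n)) : ℝ) * (indeg G (P 0) : ℝ)
        * (Lambda G ^ W.length * Lambda G ^ W'.length)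
      = (outdeg G (P (Fin.last n)) : ℝ)
        * (Lambda G ^ W.length * ((indeg G (P 0) : ℝ) * Lambda G ^ W'.length)) := by ring
    _ = Lambda G ^ (2*(n+1)) * (Lambda G ^ W.length * Lambda G ^ W'.length) := hCc1

end AuxLemmas

/-- **Main Theorem.** For an NB-irreducible graph the following are
equivalent: (1) `ρ(G) = Λ(G)`; (2) the suspended path condition; (3) the cycle
condition. -/
theorem main_theorem (h : NBIrreducible G) :
    (perron (B G) = Lambda G ↔ SuspendedPathCondition G) ∧
    (SuspendedPathCondition G ↔ CycleCondition G) := by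
  have h2 : SuspendedPathCondition G ↔ CycleCondition G :=
    ⟨fun hspc => SPC_to_CC h hspc, fun hcc => CC_to_SPC h hcc⟩
  exact ⟨(perron_iff_CC h).trans h2.symm, h2⟩

end NB
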